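/- arXiv:1202.1601 — 2 statements merged into one kernel-verified Lean document; each statement's English description precedes it below -/
import Mathlib

section
/- If n = n₁ · q^λ with q prime, λ ≥ 1, n₁ ≥ 2, and q ≥ log n, then q · (log log n - log log n₁) ≥ log log n. -/
theorem loglog_gap (n n₁ q lam : ℕ) (hq : q.Prime) (hlam : 1 ≤ lam)
    (hn₁ : 2 ≤ n₁) (hn : n = n₁ * q ^ lam) (hqlog : Real.log n ≤ q) :
    Real.log (Real.log n) ≤
      (q : ℝ) * (Real.log (Real.log n) - Real.log (Real.log n₁)) := by
  have hq2 : 2 ≤ q := hq.two_le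
  have hqR : (1:ℝ) < q := by exact_mod_cast lt_of_lt_of_le one_lt_two (by exact_mod_cast hq2)
  have hn₁R : (2:ℝ) ≤ (n₁:ℝ) := by exact_mod_cast hn₁
  have hL₁ : 0 < Real.log n₁ := Real.log_pos (by linarith)
  have hlogq : 0 < Real.log q := Real.log_pos hqR
  have hcast : (n:ℝ) = (n₁:ℝ) * (q:ℝ)^lam := by rw [hn]; push_cast; ring
  have hLn : Real.log n = Real.log n₁ + lam * Real.log q := by
    rw [hcast, Real.log_mul (by positivity) (by positivity), Real.log_pow]
  have hlam1 : (1:ℝ) ≤ (lam:ℝ) := by exact_mod_cast hlam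
  set L := Real.log n with hLdef
  set L₁ := Real.log (n₁:ℕ) with hL₁def
  have h1 : Real.log q ≤ L - L₁ := by nlinarith
  have hLpos : 0 < L := by nlinarith
  have hfrac : L₁ / L - 1 ≥ Real.log L₁ - Real.log L := by
    have h := Real.log_le_sub_one_of_pos (x := L₁/L) (by positivity)
    rw [Real.log_div (ne_of_gt hL₁) (ne_of_gt hLpos)] at h
    linarith
  have hLD : L * (Real.log L - Real.log L₁) ≥ L - L₁ := by
    have : L * (L₁ / L) = L₁ := by field_simp
    nlinarith
  have hlogLq : Real.log L ≤ Real.log q := Real.log_le_log hLpos hqlog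
  have hDpos : 0 ≤ Real.log L - Real.log L₁ := by nlinarith
  have hqL : L ≤ (q:ℝ) := hqlog
  nlinarith [mul_le_mul_of_nonneg_right hqL hDpos]
end

section
/- Let n have prime factorization q₁^{λ₁}···q_m^{λ_m} with q₁ < q₂ < ... < q_m, and let k = max_i λ_i. Let p₁ < p₂ < ... < p_m be the first m primes. Then σ(n)/n ≤ (∏_{i=1}^m (1 - p_i^{-(k+1)})) · (∏_{i=1}^m (1 - p_i^{-1})^{-1}). -/
open Finset

lemma aux_nth_prime_le {m : ℕ} (q : Fin m → ℕ) (hq : ∀ i, (q i).Prime)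
    (hmono : StrictMono q) (i : Fin m) : Nat.nth Nat.Prime i ≤ q i := by
  obtain ⟨i, hi⟩ := i
  induction i with
  | zero =>
    simpa [Nat.nth_prime_zero_eq_two] using (hq ⟨0, hi⟩).two_le
  | succ j ih =>
    have hj : j < m := Nat.lt_of_succ_lt hi
    have h1 : Nat.nth Nat.Prime j ≤ q ⟨j, hj⟩ := ih hj
    have h2 : q ⟨j, hj⟩ < q ⟨j + 1, hi⟩ := hmono (by simp [Fin.lt_def])
    by_contra h
    push_neg at h
    have := Nat.le_nth_of_lt_nth_succ h (hq ⟨j + 1, hi⟩)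
    omega

lemma aux_geom (x : ℝ) (hx : 1 < x) (k : ℕ) :
    (1 - (x ^ (k + 1))⁻¹) * (1 - x⁻¹)⁻¹ = ∑ j ∈ Finset.range (k + 1), (x⁻¹) ^ j := by
  have hx0 : x ≠ 0 := by positivity
  have hx1 : x⁻¹ ≠ 1 := by
    intro h
    rw [inv_eq_one] at h
    exact hx.ne' h
  rw [geom_sum_eq hx1, inv_pow]
  have h2 : x⁻¹ - 1 ≠ 0 := sub_ne_zero.mpr hx1
  rw [eq_div_iff h2]
  have h3 : (1:ℝ) - x⁻¹ ≠ 0 := fun h => h2 (by linarith)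
  have h4 : (1 - (x^(k+1))⁻¹) * (1 - x⁻¹)⁻¹ * (x⁻¹ - 1)
      = -((1 - (x^(k+1))⁻¹) * ((1 - x⁻¹)⁻¹ * (1 - x⁻¹))) := by ring
  rw [h4, inv_mul_cancel₀ h3]
  ring

lemma aux_sigma_div (p a : ℕ) (hp : p.Prime) :
    ((ArithmeticFunction.sigma 1 (p ^ a) : ℕ) : ℝ) / ((p : ℝ) ^ a) =
      ∑ j ∈ Finset.range (a + 1), ((p : ℝ)⁻¹) ^ j := by
  have hx0 : (p : ℝ) ≠ 0 := by exact_mod_cast hp.pos.ne'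
  rw [ArithmeticFunction.sigma_one_apply_prime_pow hp]
  push_cast
  rw [Finset.sum_div, ← Finset.sum_range_reflect]
  apply Finset.sum_congr rfl
  intro j hj
  rw [Finset.mem_range] at hj
  have hja : j ≤ a := by omega
  have : a + 1 - 1 - j = a - j := by omega
  rw [this, inv_pow, pow_sub₀ (p : ℝ) hx0 hja]
  field_simp

theorem sigma_ratio_le_prime_products (m k n : ℕ) (hm : 1 ≤ m)
    (q lam : Fin m → ℕ) (hq : ∀ i, (q i).Prime) (hmono : StrictMono q)
    (hlam : ∀ i, 1 ≤ lam i) (hn : n = ∏ i, q i ^ lam i)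
    (hk : ∀ i, lam i ≤ k) (hkmax : ∃ i, lam i = k) :
    (ArithmeticFunction.sigma 1 n : ℝ) / n ≤
      (∏ i ∈ Finset.range m, (1 - ((Nat.nth Nat.Prime i : ℝ) ^ (k + 1))⁻¹)) *
      (∏ i ∈ Finset.range m, (1 - (Nat.nth Nat.Prime i : ℝ)⁻¹)⁻¹) := by
  -- rewrite RHS as product of geometric sums
  rw [← Finset.prod_mul_distrib]
  have hRHS : ∀ i ∈ Finset.range m,
      (1 - ((Nat.nth Nat.Prime i : ℝ) ^ (k + 1))⁻¹) * (1 - (Nat.nth Nat.Prime i : ℝ)⁻¹)⁻¹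
        = ∑ j ∈ Finset.range (k + 1), ((Nat.nth Nat.Prime i : ℝ)⁻¹) ^ j := by
    intro i _
    apply aux_geom
    have h2 : 2 ≤ Nat.nth Nat.Prime i :=
      (Nat.nth_mem_of_infinite Nat.infinite_setOf_prime i).two_le
    exact_mod_cast Nat.lt_of_lt_of_le Nat.one_lt_two h2
  rw [Finset.prod_congr rfl hRHS, ← Fin.prod_univ_eq_prod_range
    (fun i => ∑ j ∈ Finset.range (k + 1), ((Nat.nth Nat.Prime i : ℝ)⁻¹) ^ j) m]
  -- rewrite LHS
  have hcop : ((Finset.univ : Finset (Fin m)) : Set (Fin m)).Pairwise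
      (Function.onFun Nat.Coprime fun i => q i ^ lam i) := by
    intro i _ j _ hij
    exact Nat.Coprime.pow _ _ (((Nat.coprime_primes (hq i) (hq j)).mpr
      (fun h => hij (hmono.injective h))))
  have hsig : (ArithmeticFunction.sigma 1 n : ℕ) =
      ∏ i, ArithmeticFunction.sigma 1 (q i ^ lam i) := by
    rw [hn]
    exact ArithmeticFunction.IsMultiplicative.map_prod _
      ArithmeticFunction.isMultiplicative_sigma Finset.univ hcop
  have hne : (n : ℝ) = ∏ i, ((q i : ℝ) ^ lam i) := by
    rw [hn]; push_cast; rfl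
  rw [hsig, hne]
  push_cast
  rw [← Finset.prod_div_distrib]
  apply Finset.prod_le_prod
  · intro i _
    positivity
  · intro i _
    rw [aux_sigma_div (q i) (lam i) (hq i)]
    have hple : Nat.nth Nat.Prime i ≤ q i := aux_nth_prime_le q hq hmono i
    have hp2 : (2 : ℕ) ≤ Nat.nth Nat.Prime i :=
      (Nat.nth_mem_of_infinite Nat.infinite_setOf_prime i).two_le
    have hinv : (q i : ℝ)⁻¹ ≤ (Nat.nth Nat.Prime i : ℝ)⁻¹ := by
      apply inv_anti₀
      · have : (0:ℕ) < Nat.nth Nat.Prime i := by omega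
        exact_mod_cast this
      · exact_mod_cast hple
    calc ∑ j ∈ Finset.range (lam i + 1), ((q i : ℝ)⁻¹) ^ j
        ≤ ∑ j ∈ Finset.range (lam i + 1), ((Nat.nth Nat.Prime (i : ℕ) : ℝ)⁻¹) ^ j := by
          apply Finset.sum_le_sum
          intro j _
          apply pow_le_pow_left₀ (by positivity) hinv
      _ ≤ ∑ j ∈ Finset.range (k + 1), ((Nat.nth Nat.Prime (i : ℕ) : ℝ)⁻¹) ^ j := by
          apply Finset.sum_le_sum_of_subset_of_nonneg
          · apply Finset.range_subset_range.mpr; have := hk i; omega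
          · intro j _ _; positivity
end
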